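/- Let p₁ = p_{1R} + i p_{1I} ∈ ℂ with p_{1R} > 0 and let α₁ ∈ ℂ, α₁ ≠ 0. With η₁(y,s) = p₁ y + s/p₁, f(y,s) = −1 − (|α₁|² |p₁|⁴ / (4 (p₁ + conj(p₁))²)) e^{η₁ + conj(η₁)} and g(y,s) = −α₁ e^{η₁}, define η_{1R}(y,s) = p_{1R}(y + s/|p₁|²), η_{1I}(y,s) = p_{1I}(y − s/|p₁|²), and η_{10} = log(|α₁| |p₁|² / (4 p_{1R})). Then for all (y,s) ∈ ℝ²: g(y,s)/f(y,s) = (α₁/|α₁|) · (2 p_{1R}/|p₁|²) · e^{i η_{1I}(y,s)} · sech(η_{1R}(y,s) + η_{10}). -/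

import Mathlib

/-!
Writing `η₁ = η_{1R} + i η_{1I}`, the exponent `η₁ + conj η₁ = 2 η_{1R}` is real and the
coefficient in `f` is `K²` with `K = |α₁| |p₁|² / (4 p_{1R}) = e^{η_{10}}`. Hence
`f = -(1 + (K e^{η_{1R}})²)` and `g = -α₁ e^{η_{1R}} e^{i η_{1I}}`, and the claim reduces to
`2 K e^a / (1 + (K e^a)²) = sech (a + log K)`.
-/

open Complex

/-- `sech u = 2/(e^u + e^{−u})`. -/
noncomputable def sech (u : ℝ) : ℝ := 2 / (Real.exp u + Real.exp (-u))

open ComplexConjugate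

theorem sech_add_log {K : ℝ} (hK : 0 < K) (a : ℝ) :
    sech (a + Real.log K) = 2 * (K * Real.exp a) / (1 + (K * Real.exp a) ^ 2) := by
  rw [sech, neg_add, Real.exp_add, Real.exp_add, Real.exp_neg, Real.exp_neg, Real.exp_log hK]
  field_simp
  ring

theorem two_mul_div_mul_sech_add_log {A pR P : ℝ} (hA : 0 < A) (hpR : 0 < pR) (hP : 0 < P)
    (a : ℝ) :
    2 * pR / P * sech (a + Real.log (A * P / (4 * pR)))
      = A * Real.exp a / (1 + (A * P / (4 * pR) * Real.exp a) ^ 2) := by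
  rw [sech_add_log (by positivity)]
  field_simp
  ring

theorem Complex.mul_ofReal_add_ofReal_div (p : ℂ) (y s : ℝ) :
    p * y + s / p
      = ((p.re * (y + s / normSq p) : ℝ) : ℂ)
        + ((p.im * (y - s / normSq p) : ℝ) : ℂ) * I := by
  rw [div_eq_mul_inv, inv_def]
  apply Complex.ext <;> simp <;> ring

theorem Complex.exp_add_conj (z : ℂ) :
    exp (z + conj z) = ((Real.exp z.re ^ 2 : ℝ) : ℂ) := by
  rw [add_conj, ← Real.exp_nat_mul]
  push_cast
  ring_nf

theorem norm_sq_mul_norm_pow_four_div_add_conj_sq (α p : ℂ) :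
    (‖α‖ : ℂ) ^ 2 * (‖p‖ : ℂ) ^ 4 / (4 * (p + conj p) ^ 2)
      = (((‖α‖ * normSq p / (4 * p.re)) ^ 2 : ℝ) : ℂ) := by
  have hnorm : (‖p‖ : ℂ) ^ 4 = ((normSq p ^ 2 : ℝ) : ℂ) := by
    rw [normSq_eq_norm_sq]; push_cast; ring
  rw [add_conj, hnorm]
  push_cast
  ring

theorem csp_one_soliton_profile
    (p1R p1I : ℝ) (hp : 0 < p1R) (α₁ : ℂ) (hα : α₁ ≠ 0)
    (p₁ : ℂ) (hp₁ : p₁ = ⟨p1R, p1I⟩)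
    (η₁ : ℝ → ℝ → ℂ) (hη₁ : ∀ y s, η₁ y s = p₁ * (y : ℂ) + (s : ℂ) / p₁)
    (f g : ℝ → ℝ → ℂ)
    (hf : ∀ y s, f y s = -1 -
      ((‖α₁‖ : ℂ)^2 * (‖p₁‖ : ℂ)^4 / (4 * (p₁ + starRingEnd ℂ p₁)^2))
        * Complex.exp (η₁ y s + starRingEnd ℂ (η₁ y s)))
    (hg : ∀ y s, g y s = -α₁ * Complex.exp (η₁ y s))
    (η1R η1I : ℝ → ℝ → ℝ)
    (hη1R : ∀ y s, η1R y s = p1R * (y + s / (p1R^2 + p1I^2)))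
    (hη1I : ∀ y s, η1I y s = p1I * (y - s / (p1R^2 + p1I^2)))
    (η10 : ℝ)
    (hη10 : η10 = Real.log (‖α₁‖ * (p1R^2 + p1I^2) / (4 * p1R))) :
    ∀ y s, g y s / f y s
      = (α₁ / (‖α₁‖ : ℂ)) * ((2 * p1R / (p1R^2 + p1I^2) : ℝ) : ℂ)
          * Complex.exp (Complex.I * (η1I y s : ℂ))
          * ((sech (η1R y s + η10) : ℝ) : ℂ) := by
  intro y s
  have hre : p₁.re = p1R := by rw [hp₁]
  have him : p₁.im = p1I := by rw [hp₁]
  have hnormSq : normSq p₁ = p1R ^ 2 + p1I ^ 2 := by rw [hp₁, normSq_mk]; ring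
  have hη : η₁ y s = η1R y s + η1I y s * I := by
    rw [hη₁, mul_ofReal_add_ofReal_div, hnormSq, hre, him, hη1R, hη1I]
  set K := ‖α₁‖ * (p1R ^ 2 + p1I ^ 2) / (4 * p1R) with hK
  have hf' : f y s = -((1 + (K * Real.exp (η1R y s)) ^ 2 : ℝ) : ℂ) := by
    rw [hf, norm_sq_mul_norm_pow_four_div_add_conj_sq, hnormSq, hre, exp_add_conj, hη, ← hK]
    simp only [ofReal_pow, add_re, ofReal_re, mul_re, I_re, mul_zero, ofReal_im, I_im, mul_one,
      sub_self, add_zero, ofReal_exp, ofReal_add, ofReal_one, ofReal_mul, neg_add_rev]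
    ring
  have hA : (‖α₁‖ : ℂ) ≠ 0 := by simpa using hα
  rw [hf', hg, hη, exp_add, ← ofReal_exp, mul_comm I]
  calc _ = α₁ / ‖α₁‖
        * ((‖α₁‖ * Real.exp (η1R y s) / (1 + (K * Real.exp (η1R y s)) ^ 2) : ℝ) : ℂ)
        * exp (η1I y s * I) := by
        rw [ofReal_div, ofReal_mul]
        field_simp
    _ = _ := by
        rw [hη10, hK, ← two_mul_div_mul_sech_add_log (norm_pos_iff.mpr hα) hp (by positivity)]
        push_cast
        ring
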